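/- arXiv:1909.09842 — 2 statements merged into one kernel-verified Lean document; each statement's English description precedes it below -/
import Mathlib

section
/- Let α_0, α_1, …, α_d be a family of Dirac matrices, let m ≥ 0, t ∈ ℝ and ξ ∈ ℝ^d be such that ⟨ξ⟩_m > 0. Then the matrix exponential μ_t(ξ) admits the explicit expression μ_t(ξ) = cos(2π t ⟨ξ⟩_m) I_n − i (sin(2π t ⟨ξ⟩_m) / ⟨ξ⟩_m) (m α_0 + Σ_{j=1}^d ξ_j α_j). -/
open scoped BigOperators Real
open Matrix Complex

noncomputable section

set_option maxHeartbeats 1000000 in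
theorem dirac_multiplier_formula (n d : ℕ) (hn : 1 ≤ n) (hd : 1 ≤ d)
    (α : Fin (d + 1) → Matrix (Fin n) (Fin n) ℂ)
    (hherm : ∀ i, (α i).IsHermitian)
    (hanti : ∀ i j, α i * α j + α j * α i =
      if i = j then (2 : ℂ) • (1 : Matrix (Fin n) (Fin n) ℂ) else 0)
    (m : ℝ) (hm : 0 ≤ m) (t : ℝ) (ξ : Fin d → ℝ)
    (hξ : 0 < Real.sqrt (m ^ 2 + ∑ j, (ξ j) ^ 2)) :
    NormedSpace.exp
        (((-2 * π * t : ℝ) : ℂ) • Complex.I •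
          ((m : ℂ) • α 0 + ∑ j : Fin d, (ξ j : ℂ) • α j.succ))
      = ((Real.cos (2 * π * t * Real.sqrt (m ^ 2 + ∑ j, (ξ j) ^ 2)) : ℂ))
            • (1 : Matrix (Fin n) (Fin n) ℂ)
        - (Complex.I * (Real.sin (2 * π * t * Real.sqrt (m ^ 2 + ∑ j, (ξ j) ^ 2)) : ℂ)
              / (Real.sqrt (m ^ 2 + ∑ j, (ξ j) ^ 2) : ℂ))
            • ((m : ℂ) • α 0 + ∑ j : Fin d, (ξ j : ℂ) • α j.succ) := by
  set r : ℝ := Real.sqrt (m ^ 2 + ∑ j, (ξ j) ^ 2) with hrdef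
  have hr : (0:ℝ) < r := hξ
  have hrne : (r : ℂ) ≠ 0 := by exact_mod_cast hr.ne'
  have hr2 : r ^ 2 = m ^ 2 + ∑ j, (ξ j) ^ 2 := Real.sq_sqrt (by positivity)
  set A : Matrix (Fin n) (Fin n) ℂ :=
    (m : ℂ) • α 0 + ∑ j : Fin d, (ξ j : ℂ) • α j.succ with hA
  set c : Fin (d+1) → ℂ := Fin.cases (m : ℂ) (fun j => (ξ j : ℂ)) with hc
  have hAsum : A = ∑ i, c i • α i := by
    rw [Fin.sum_univ_succ]
    simp [hc, hA]
  -- the square of A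
  have hcsum : ∑ i, c i * c i = (r : ℂ) ^ 2 := by
    rw [Fin.sum_univ_succ]
    have : ((r : ℂ))^2 = ((r^2 : ℝ) : ℂ) := by push_cast; ring
    rw [this, hr2]
    push_cast
    simp [hc, sq]
  have hAA : A * A = ((r : ℂ) ^ 2) • (1 : Matrix (Fin n) (Fin n) ℂ) := by
    have h1 : A * A = ∑ i, ∑ j, (c i * c j) • (α i * α j) := by
      rw [hAsum, Finset.sum_mul_sum]
      simp_rw [smul_mul_smul_comm]
    have h2 : A * A = ∑ i, ∑ j, (c i * c j) • (α j * α i) := by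
      rw [h1, Finset.sum_comm]
      refine Finset.sum_congr rfl fun i _ => ?_
      refine Finset.sum_congr rfl fun j _ => ?_
      rw [mul_comm (c j) (c i)]
    have key : A * A + A * A
        = ((2 : ℂ) * (r : ℂ) ^ 2) • (1 : Matrix (Fin n) (Fin n) ℂ) := by
      have h12 : A * A + A * A = ∑ i, ∑ j, (c i * c j) • (α i * α j + α j * α i) := by
        rw [congrArg₂ (· + ·) h1 h2, ← Finset.sum_add_distrib]
        refine Finset.sum_congr rfl fun i _ => ?_
        rw [← Finset.sum_add_distrib]
        exact Finset.sum_congr rfl fun j _ => (smul_add _ _ _).symm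
      rw [h12]
      simp_rw [hanti, smul_ite, smul_zero]
      rw [Finset.sum_congr rfl (fun i _ => Finset.sum_ite_eq Finset.univ i
        (fun j => (c i * c j) • ((2 : ℂ) • (1 : Matrix (Fin n) (Fin n) ℂ))))]
      simp only [Finset.mem_univ, if_true]
      rw [← Finset.sum_smul, hcsum, smul_smul, mul_comm]
    have h2' : (2 : ℂ) • (A * A)
        = (2 : ℂ) • (((r : ℂ) ^ 2) • (1 : Matrix (Fin n) (Fin n) ℂ)) := by
      rw [two_smul, key, smul_smul]
    exact smul_right_injective _ (two_ne_zero) h2'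
  -- setup for the series
  set z : ℂ := ((-2 * π * t : ℝ) : ℂ) * Complex.I with hz
  set θ : ℝ := 2 * π * t * r with hθ
  set q : ℂ := z ^ 2 * (r : ℂ) ^ 2 with hqdef
  have hq : q = -((θ : ℝ) : ℂ) ^ 2 := by
    rw [hqdef, hz, hθ]
    push_cast
    ring_nf
    rw [Complex.I_sq]
    ring
  set M : Matrix (Fin n) (Fin n) ℂ := z • A with hM
  have hexp_arg : ((-2 * π * t : ℝ) : ℂ) • Complex.I • A = M := by
    rw [hM, hz, smul_smul]
  have hM2 : M ^ 2 = q • (1 : Matrix (Fin n) (Fin n) ℂ) := by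
    rw [hM, smul_pow, sq A, hAA, smul_smul, hqdef]
  have hMeven : ∀ k : ℕ, M ^ (2 * k) = q ^ k • (1 : Matrix (Fin n) (Fin n) ℂ) := by
    intro k
    rw [pow_mul, hM2, smul_pow, one_pow]
  have hModd : ∀ k : ℕ, M ^ (2 * k + 1) = (q ^ k * z) • A := by
    intro k
    rw [pow_succ, hMeven, hM, smul_mul_smul_comm, one_mul]
  -- series for cos
  have hcos : HasSum (fun k : ℕ => (q ^ k / ((2 * k).factorial : ℂ)))
      (((θ : ℝ) : ℂ).cos) := by
    have h := Complex.hasSum_cos' ((θ : ℝ) : ℂ)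
    convert h using 2 with k
    rw [pow_mul]
    congr 1
    rw [hq]
    rw [mul_pow, Complex.I_sq]
    ring
  have hsin : HasSum (fun k : ℕ => (q ^ k * ((θ : ℝ) : ℂ) / ((2 * k + 1).factorial : ℂ)))
      (((θ : ℝ) : ℂ).sin) := by
    have h := Complex.hasSum_sin' ((θ : ℝ) : ℂ)
    convert h using 2 with k
    rw [pow_succ, pow_mul]
    have hsq : (((θ : ℝ) : ℂ) * Complex.I) ^ 2 = q := by
      rw [hq, mul_pow, Complex.I_sq]; ring
    rw [hsq]
    rw [mul_comm (q ^ k) (((θ : ℝ) : ℂ) * Complex.I), mul_comm (((θ : ℝ) : ℂ)) Complex.I,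
      mul_assoc, mul_div_assoc, mul_div_assoc, mul_div_cancel_left₀ _ Complex.I_ne_zero]
    ring
  -- the odd-part scalar series
  have hzθ : z = ((θ : ℝ) : ℂ) * (-Complex.I / (r : ℂ)) := by
    rw [hz, hθ]
    field_simp
    push_cast
    ring
  have hodd : HasSum
      (fun k : ℕ => (q ^ k * z / ((2 * k + 1).factorial : ℂ)))
      (((θ : ℝ) : ℂ).sin * (-Complex.I / (r : ℂ))) := by
    have h := hsin.mul_right (-Complex.I / (r : ℂ))
    have e : (fun k : ℕ => (q ^ k * z / ((2 * k + 1).factorial : ℂ)))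
        = fun k : ℕ => q ^ k * ((θ : ℝ) : ℂ) / ((2 * k + 1).factorial : ℂ) * (-Complex.I / (r : ℂ)) := by
      funext k
      rw [hzθ]
      ring
    rw [e]
    exact h
  -- put it together
  rw [hexp_arg, NormedSpace.exp_eq_tsum (𝕂 := ℂ)]
  have heven' : HasSum (fun k : ℕ => (((2 * k).factorial : ℂ)⁻¹) • M ^ (2 * k))
      ((((θ : ℝ) : ℂ).cos) • (1 : Matrix (Fin n) (Fin n) ℂ)) := by
    have h := hcos.smul_const (1 : Matrix (Fin n) (Fin n) ℂ)
    convert h using 2 with k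
    rw [hMeven, smul_smul, div_eq_inv_mul]
  have hodd' : HasSum (fun k : ℕ => (((2 * k + 1).factorial : ℂ)⁻¹) • M ^ (2 * k + 1))
      ((((θ : ℝ) : ℂ).sin * (-Complex.I / (r : ℂ))) • A) := by
    have h := hodd.smul_const A
    convert h using 2 with k
    rw [hModd, smul_smul, div_eq_inv_mul]
  have htot := HasSum.even_add_odd (f := fun k : ℕ => ((k.factorial : ℂ))⁻¹ • M ^ k)
    heven' hodd'
  show (∑' k : ℕ, ((k.factorial : ℂ))⁻¹ • M ^ k) = _
  rw [htot.tsum_eq]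
  rw [Complex.ofReal_cos, Complex.ofReal_sin]
  rw [sub_eq_add_neg]
  congr 1
  rw [← neg_smul]
  congr 1
  field_simp
end
end

section
/- Let H be a complex separable Hilbert space, d ≥ 1, and let N > d/2 be an integer. There exists a constant C = C(d,N) > 0 such that for every f ∈ 𝒮(ℝ^d, H) one has the Bernstein-type multiplier estimate ∫_{ℝ^d} ‖𝓕f(ξ)‖_H dξ ≤ C ‖f‖_{L²(ℝ^d,H)}^{1 − d/(2N)} ( Σ_{j=1}^d ‖∂_j^N f‖_{L²(ℝ^d,H)} )^{d/(2N)}. -/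
open scoped BigOperators Real SchwartzMap NNReal ENNReal
open MeasureTheory

noncomputable section

/-- `N`-th iterated partial derivative in the `j`-th coordinate direction. -/
def iterPartialDeriv (d : ℕ) {H : Type*} [NormedAddCommGroup H] [NormedSpace ℝ H]
    (j : Fin d) (N : ℕ) (f : EuclideanSpace ℝ (Fin d) → H) :
    EuclideanSpace ℝ (Fin d) → H :=
  (fun g (x : EuclideanSpace ℝ (Fin d)) =>
    fderiv ℝ g x (EuclideanSpace.single j (1 : ℝ)))^[N] f

open scoped FourierTransform InnerProductSpace
open Filter

/-- partial derivative on Schwartz space as a continuous linear map -/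
def SchwartzMap.pderivCLM (𝕜 : Type*) [RCLike 𝕜] {E F : Type*} [NormedAddCommGroup E]
    [NormedSpace ℝ E] [NormedAddCommGroup F] [NormedSpace ℝ F] [NormedSpace 𝕜 F]
    [SMulCommClass ℝ 𝕜 F] (m : E) : 𝓢(E, F) →L[𝕜] 𝓢(E, F) :=
  SchwartzMap.evalCLM 𝕜 E F m ∘L SchwartzMap.fderivCLM 𝕜 E F

theorem SchwartzMap.pderivCLM_apply (𝕜 : Type*) [RCLike 𝕜] {E F : Type*} [NormedAddCommGroup E]
    [NormedSpace ℝ E] [NormedAddCommGroup F] [NormedSpace ℝ F] [NormedSpace 𝕜 F]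
    [SMulCommClass ℝ 𝕜 F] (m : E) (f : 𝓢(E, F)) (x : E) :
    SchwartzMap.pderivCLM 𝕜 m f x = fderiv ℝ f x m := rfl

section Aux

set_option linter.unusedSectionVars false

variable {d N : ℕ} {H : Type*} [NormedAddCommGroup H] [InnerProductSpace ℂ H] [CompleteSpace H]
    [SecondCountableTopology H]

local notation "V" => EuclideanSpace ℝ (Fin d)

theorem my_plancherel (f : 𝓢(V, H)) :
    ∫ ξ : V, ‖𝓕 ⇑f ξ‖ ^ 2 = ∫ x, ‖f x‖ ^ 2 := by
  have hFc : Continuous (𝓕 ⇑f) := by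
    rw [← SchwartzMap.fourier_coe, ← SchwartzMap.fourierTransformCLM_apply ℝ f]
    exact (SchwartzMap.fourierTransformCLM ℝ f).continuous
  have hFi : Integrable (𝓕 ⇑f) (volume : Measure V) := by
    rw [← SchwartzMap.fourier_coe, ← SchwartzMap.fourierTransformCLM_apply ℝ f]
    exact (SchwartzMap.fourierTransformCLM ℝ f).integrable
  have hfi := f.integrable (μ := (volume : Measure V))
  have h1 : ∀ ξ : V, (⟪𝓕 ⇑f ξ, 𝓕 ⇑f ξ⟫_ℂ) = ∫ x : V, ⟪𝓕 ⇑f ξ, 𝐞 (-⟪x, ξ⟫_ℝ) • f x⟫_ℂ := by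
    intro ξ
    rw [integral_inner ((Real.fourierIntegral_convergent_iff ξ).2 f.integrable) (𝓕 ⇑f ξ)]
    rfl
  have hcont2 : Continuous fun p : V × V => (⟪𝓕 ⇑f p.1, 𝐞 (-⟪p.2, p.1⟫_ℝ) • f p.2⟫_ℂ) := by
    have hsm : Continuous fun p : V × V => 𝐞 (-⟪p.2, p.1⟫_ℝ) • f p.2 :=
      (Real.continuous_fourierChar.comp
        ((continuous_snd.inner continuous_fst).neg)).smul (f.continuous.comp continuous_snd)
    exact (hFc.comp continuous_fst).inner hsm
  have hint2 : Integrable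
      (Function.uncurry fun ξ x : V => (⟪𝓕 ⇑f ξ, 𝐞 (-⟪x, ξ⟫_ℝ) • f x⟫_ℂ))
      ((volume : Measure V).prod volume) := by
    apply (hFi.norm.mul_prod f.integrable.norm).mono' hcont2.aestronglyMeasurable
    filter_upwards with p
    calc ‖(⟪𝓕 ⇑f p.1, 𝐞 (-⟪p.2, p.1⟫_ℝ) • f p.2⟫_ℂ)‖
        ≤ ‖𝓕 ⇑f p.1‖ * ‖𝐞 (-⟪p.2, p.1⟫_ℝ) • f p.2‖ := norm_inner_le_norm _ _
      _ = ‖𝓕 ⇑f p.1‖ * ‖f p.2‖ := by simp [Circle.smul_def, norm_smul, Circle.norm_coe]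
  have h3 : ∀ x : V, (∫ ξ : V, ⟪𝓕 ⇑f ξ, 𝐞 (-⟪x, ξ⟫_ℝ) • f x⟫_ℂ) = ⟪f x, f x⟫_ℂ := by
    intro x
    have hg : Integrable (fun ξ : V => 𝐞 (⟪ξ, x⟫_ℝ) • (𝓕 ⇑f) ξ) := by
      apply hFi.norm.mono'
      · exact ((Real.continuous_fourierChar.comp
          (continuous_id.inner continuous_const)).smul hFc).aestronglyMeasurable
      · filter_upwards with ξ
        simp [Circle.smul_def, norm_smul, Circle.norm_coe]
    have e1 : (fun ξ : V => (⟪𝓕 ⇑f ξ, 𝐞 (-⟪x, ξ⟫_ℝ) • f x⟫_ℂ))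
        = fun ξ : V => (⟪𝐞 (⟪ξ, x⟫_ℝ) • 𝓕 ⇑f ξ, f x⟫_ℂ) := by
      funext ξ
      simp only [Circle.smul_def, inner_smul_right, inner_smul_left]
      congr 1
      simp only [Real.fourierChar_apply, ← Complex.exp_conj, map_mul, Complex.conj_I,
        Complex.conj_ofReal]
      rw [real_inner_comm]
      push_cast
      ring_nf
    rw [e1]
    calc ∫ ξ : V, (⟪𝐞 (⟪ξ, x⟫_ℝ) • 𝓕 ⇑f ξ, f x⟫_ℂ)
        = ∫ ξ : V, (starRingEnd ℂ) ⟪f x, 𝐞 (⟪ξ, x⟫_ℝ) • 𝓕 ⇑f ξ⟫_ℂ := by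
          simp_rw [inner_conj_symm]
      _ = (starRingEnd ℂ) ⟪f x, ∫ ξ : V, 𝐞 (⟪ξ, x⟫_ℝ) • 𝓕 ⇑f ξ⟫_ℂ := by
          rw [integral_conj, integral_inner hg]
      _ = ⟪∫ ξ : V, 𝐞 (⟪ξ, x⟫_ℝ) • 𝓕 ⇑f ξ, f x⟫_ℂ := inner_conj_symm _ _
      _ = ⟪f x, f x⟫_ℂ := by
          have h := Continuous.fourierInv_fourier_eq f.continuous hfi hFi
          have h2 : 𝓕⁻ (𝓕 ⇑f) x = f x := congrFun h x
          rw [← Real.fourierInv_eq] at *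
          rw [h2]
  have key : (∫ ξ : V, ⟪𝓕 ⇑f ξ, 𝓕 ⇑f ξ⟫_ℂ) = ∫ x : V, ⟪f x, f x⟫_ℂ := by
    calc (∫ ξ : V, ⟪𝓕 ⇑f ξ, 𝓕 ⇑f ξ⟫_ℂ)
        = ∫ ξ : V, ∫ x : V, ⟪𝓕 ⇑f ξ, 𝐞 (-⟪x, ξ⟫_ℝ) • f x⟫_ℂ := by simp_rw [h1]
      _ = ∫ x : V, ∫ ξ : V, ⟪𝓕 ⇑f ξ, 𝐞 (-⟪x, ξ⟫_ℝ) • f x⟫_ℂ := integral_integral_swap hint2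
      _ = ∫ x : V, ⟪f x, f x⟫_ℂ := by simp_rw [h3]
  simp only [inner_self_eq_norm_sq_to_K, ← RCLike.ofReal_pow] at key
  rw [integral_ofReal, integral_ofReal] at key
  exact_mod_cast key

theorem my_fourier_pderiv (g : 𝓢(V, H)) (j : Fin d) (ξ : V) :
    𝓕 ⇑(SchwartzMap.pderivCLM ℝ (EuclideanSpace.single j (1:ℝ)) g) ξ
      = (((2 * π * ξ j : ℝ) : ℂ) * Complex.I) • 𝓕 ⇑g ξ := by
  have hint : Integrable (fderiv ℝ ⇑g) (volume : Measure V) := by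
    have h := (SchwartzMap.fderivCLM ℝ V H g).integrable (μ := (volume : Measure V))
    refine h.congr ?_
    filter_upwards with x
    rfl
  have h1 : ⇑(SchwartzMap.pderivCLM ℝ (EuclideanSpace.single j (1:ℝ)) g)
      = fun x => fderiv ℝ ⇑g x (EuclideanSpace.single j (1:ℝ)) := by
    funext x; exact SchwartzMap.pderivCLM_apply ℝ _ g x
  rw [h1, ← Real.fourier_continuousLinearMap_apply hint,
    Real.fourier_fderiv g.integrable g.differentiable hint,
    VectorFourier.fourierSMulRight_apply]
  simp only [ContinuousLinearMap.neg_apply, innerSL_apply_apply ℝ,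
    EuclideanSpace.inner_single_right, RCLike.star_def, conj_trivial, one_mul, neg_smul, smul_smul]
  rw [smul_neg, neg_neg, ← Complex.coe_smul, smul_smul]
  congr 1
  push_cast
  ring

theorem my_fourier_pderiv_iter (f : 𝓢(V, H)) (j : Fin d) (n : ℕ) (ξ : V) :
    𝓕 ⇑((SchwartzMap.pderivCLM ℝ (EuclideanSpace.single j (1:ℝ)))^[n] f) ξ
      = ((((2 * π * ξ j : ℝ) : ℂ) * Complex.I)) ^ n • 𝓕 ⇑f ξ := by
  induction n with
  | zero => simp
  | succ n ih =>
      rw [Function.iterate_succ_apply', my_fourier_pderiv, ih, smul_smul, ← pow_succ']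

theorem iterPartialDeriv_eq (f : 𝓢(V, H)) (j : Fin d) (n : ℕ) :
    iterPartialDeriv d j n ⇑f
      = ⇑((SchwartzMap.pderivCLM ℝ (EuclideanSpace.single j (1:ℝ)))^[n] f) := by
  induction n with
  | zero => rfl
  | succ n ih =>
      unfold iterPartialDeriv at *
      rw [Function.iterate_succ_apply', Function.iterate_succ_apply', ih]
      funext x
      exact (SchwartzMap.pderivCLM_apply ℝ _ _ x).symm

theorem my_norm_sq_fourier_iter (f : 𝓢(V, H)) (j : Fin d) (n : ℕ) (ξ : V) :
    ‖𝓕 ⇑((SchwartzMap.pderivCLM ℝ (EuclideanSpace.single j (1:ℝ)))^[n] f) ξ‖ ^ 2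
      = ((2 * π * ξ j) ^ 2) ^ n * ‖𝓕 ⇑f ξ‖ ^ 2 := by
  rw [my_fourier_pderiv_iter, norm_smul, mul_pow, norm_pow]
  congr 1
  have : ‖(((2 * π * ξ j : ℝ) : ℂ) * Complex.I)‖ = |2 * π * ξ j| := by
    simp only [norm_mul, Complex.norm_I, Complex.norm_real, Real.norm_eq_abs, mul_one, abs_mul]
  rw [this]
  rw [← pow_mul, mul_comm n 2, pow_mul, sq_abs]

/-- the weight -/
def Wt (d N : ℕ) (ξ : EuclideanSpace ℝ (Fin d)) : ℝ := ∑ j : Fin d, ((2 * π * ξ j) ^ 2) ^ N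

theorem Wt_nonneg (ξ : V) : 0 ≤ Wt d N ξ :=
  Finset.sum_nonneg fun j _ => pow_nonneg (sq_nonneg _) N

theorem Wt_continuous : Continuous (Wt d N) := by
  apply continuous_finset_sum
  intro j _
  have : Continuous fun ξ : V => ξ j := (EuclideanSpace.proj (𝕜 := ℝ) j).continuous
  fun_prop

theorem Wt_smul (c : ℝ) (ξ : V) : Wt d N (c • ξ) = (c ^ (2 * N)) * Wt d N ξ := by
  unfold Wt
  rw [Finset.mul_sum]
  congr 1
  funext j
  have : (c • ξ) j = c * ξ j := rfl
  rw [this, ← pow_mul, ← pow_mul]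
  ring

theorem norm_sq_eq_sum (η : V) : ‖η‖ ^ 2 = ∑ j, (η j) ^ 2 := by
  rw [EuclideanSpace.norm_eq, Real.sq_sqrt (by positivity)]
  congr 1; funext j; rw [Real.norm_eq_abs, sq_abs]

theorem one_add_pow_le (hd : 1 ≤ d) (hN : 1 ≤ N) :
    ∃ c₁ : ℝ, 0 < c₁ ∧ ∀ η : V, (1 + ‖η‖) ^ (2 * N) ≤ c₁ * (1 + Wt d N η) := by
  set c₂ : ℝ := ((2 * π) ^ 2) ^ N with hc₂
  have hc₂pos : 0 < c₂ := by positivity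
  set K : ℝ := max 1 ((d : ℝ) ^ (N - 1) / c₂) with hK
  refine ⟨4 ^ N * K, by positivity, fun η => ?_⟩
  set s : ℝ := ‖η‖ ^ 2 with hs
  have hs0 : 0 ≤ s := sq_nonneg _
  set T : ℝ := ∑ j, ((η j) ^ 2) ^ N with hT
  have hT0 : 0 ≤ T := Finset.sum_nonneg fun j _ => by positivity
  have hWT : Wt d N η = c₂ * T := by
    unfold Wt
    rw [hc₂, hT, Finset.mul_sum]
    congr 1; funext j
    rw [← mul_pow]
    congr 1; ring
  have step1 : (1 + ‖η‖) ^ (2 * N) ≤ 2 ^ N * (1 + s) ^ N := by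
    have h1 : (1 + ‖η‖) ^ (2 * N) = ((1 + ‖η‖) ^ 2) ^ N := by rw [← pow_mul]
    have h2 : (1 + ‖η‖) ^ 2 ≤ 2 * (1 + s) := by
      rw [hs]; nlinarith [norm_nonneg η, sq_nonneg (1 - ‖η‖)]
    rw [h1, ← mul_pow (2 : ℝ)]
    exact pow_le_pow_left₀ (by positivity) h2 N
  have step2 : (1 + s) ^ N ≤ 2 ^ N * (1 + s ^ N) := by
    rcases le_total s 1 with h | h
    · have : (1 + s) ^ N ≤ 2 ^ N := pow_le_pow_left₀ (by positivity) (by linarith) N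
      have h2 : (1 : ℝ) ≤ 1 + s ^ N := by nlinarith [pow_nonneg hs0 N]
      nlinarith [pow_pos (show (0:ℝ) < 2 by norm_num) N]
    · have h1 : (1 + s) ^ N ≤ (2 * s) ^ N := pow_le_pow_left₀ (by positivity) (by linarith) N
      have h2 : (2 * s) ^ N = 2 ^ N * s ^ N := by rw [mul_pow]
      have h3 : (2:ℝ) ^ N * s ^ N ≤ 2 ^ N * (1 + s ^ N) := by
        have : (0:ℝ) < 2 ^ N := by positivity
        nlinarith
      linarith
  have step3 : s ^ N ≤ (d : ℝ) ^ (N - 1) * T := by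
    obtain ⟨m, rfl⟩ : ∃ m, N = m + 1 := ⟨N - 1, (Nat.succ_pred_eq_of_pos hN).symm⟩
    have hP := pow_sum_div_card_le_sum_pow (s := Finset.univ) (f := fun j : Fin d => (η j) ^ 2)
      (fun j _ => sq_nonneg _) m
    simp only [Finset.card_univ, Fintype.card_fin] at hP
    rw [hs, norm_sq_eq_sum]
    rw [div_le_iff₀ (by positivity : (0:ℝ) < (d:ℝ) ^ m)] at hP
    simpa [Nat.add_sub_cancel, mul_comm] using hP
  have step4 : 1 + (d : ℝ) ^ (N - 1) * T ≤ K * (1 + c₂ * T) := by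
    have hK1 : (1 : ℝ) ≤ K := le_max_left _ _
    have hK2 : (d : ℝ) ^ (N - 1) / c₂ ≤ K := le_max_right _ _
    have : (d : ℝ) ^ (N - 1) * T ≤ K * (c₂ * T) := by
      rw [div_le_iff₀ hc₂pos] at hK2
      calc (d : ℝ) ^ (N - 1) * T ≤ (K * c₂) * T := by nlinarith
        _ = K * (c₂ * T) := by ring
    nlinarith
  calc (1 + ‖η‖) ^ (2 * N) ≤ 2 ^ N * (1 + s) ^ N := step1
    _ ≤ 2 ^ N * (2 ^ N * (1 + s ^ N)) := by
        have : (0:ℝ) < 2 ^ N := by positivity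
        nlinarith
    _ = 4 ^ N * (1 + s ^ N) := by rw [← mul_assoc, ← mul_pow]; norm_num
    _ ≤ 4 ^ N * (1 + (d : ℝ) ^ (N - 1) * T) := by
        have h4 : (0:ℝ) < 4 ^ N := by positivity
        nlinarith
    _ ≤ 4 ^ N * (K * (1 + c₂ * T)) := by
        have h4 : (0:ℝ) < 4 ^ N := by positivity
        nlinarith
    _ = 4 ^ N * K * (1 + Wt d N η) := by rw [hWT]; ring

theorem Wt_one_add_integrable (hd : 1 ≤ d) (hNd : (d : ℝ) < 2 * N) (hN : 1 ≤ N) :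
    Integrable (fun η : V => (1 + Wt d N η)⁻¹) := by
  obtain ⟨c₁, hc₁, hb⟩ := one_add_pow_le (d := d) (N := N) hd hN
  have hint : Integrable (fun η : V => c₁ * (1 + ‖η‖) ^ (-(2 * N : ℝ))) := by
    apply Integrable.const_mul
    apply integrable_one_add_norm (μ := (volume : Measure V))
    rw [finrank_euclideanSpace_fin]
    exact hNd
  apply hint.mono'
  · have hc : Continuous fun η : V => (1 + Wt d N η)⁻¹ := by
      apply Continuous.inv₀ (continuous_const.add Wt_continuous)
      intro η
      have := Wt_nonneg (N := N) η
      exact (by linarith : (0:ℝ) < 1 + Wt d N η).ne'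
    exact hc.aestronglyMeasurable
  · filter_upwards with η
    have hpos : (0:ℝ) < 1 + Wt d N η := by have := Wt_nonneg (N := N) η; linarith
    rw [Real.norm_of_nonneg (by positivity)]
    have hb1 : (0:ℝ) < (1 + ‖η‖) := by have := norm_nonneg η; linarith
    have h2 : (1 + ‖η‖) ^ (-(2 * N : ℝ)) = ((1 + ‖η‖) ^ (2 * N : ℕ))⁻¹ := by
      rw [Real.rpow_neg hb1.le, ← Real.rpow_natCast (1 + ‖η‖) (2 * N)]
      push_cast
      ring_nf
    have hXpos : (0:ℝ) < (1 + ‖η‖) ^ (2 * N : ℕ) := by positivity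
    calc (1 + Wt d N η)⁻¹ ≤ c₁ / (1 + ‖η‖) ^ (2 * N : ℕ) := by
          rw [le_div_iff₀ hXpos]
          calc (1 + Wt d N η)⁻¹ * (1 + ‖η‖) ^ (2 * N : ℕ)
              ≤ (1 + Wt d N η)⁻¹ * (c₁ * (1 + Wt d N η)) :=
                mul_le_mul_of_nonneg_left (hb η) (by positivity)
            _ = c₁ := by field_simp
      _ = c₁ * (1 + ‖η‖) ^ (-(2 * N : ℝ)) := by rw [h2, div_eq_mul_inv]

theorem Wt_scaled_integral (hd : 1 ≤ d) (hNd : (d : ℝ) < 2 * N) (hN : 1 ≤ N)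
    {a b : ℝ} (ha : 0 < a) (hb : 0 < b) :
    Integrable (fun ξ : V => (a + b * Wt d N ξ)⁻¹) ∧
    ∫ ξ : V, (a + b * Wt d N ξ)⁻¹
      = a⁻¹ * ((a / b) ^ (((2 * N : ℕ) : ℝ))⁻¹) ^ d * ∫ η : V, (1 + Wt d N η)⁻¹ := by
  set l : ℝ := (a / b) ^ (((2 * N : ℕ) : ℝ))⁻¹ with hl
  have hlpos : 0 < l := Real.rpow_pos_of_pos (div_pos ha hb) _
  have hl2N : l ^ (2 * N) = a / b :=
    Real.rpow_inv_natCast_pow (le_of_lt (div_pos ha hb)) (by positivity)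
  have hpt : ∀ ξ : V, (a + b * Wt d N ξ)⁻¹ = a⁻¹ * (1 + Wt d N (l⁻¹ • ξ))⁻¹ := by
    intro ξ
    rw [Wt_smul]
    have h1 : (l⁻¹) ^ (2 * N) = b / a := by
      rw [inv_pow, hl2N]
      field_simp
    rw [h1]
    have hW := Wt_nonneg (N := N) ξ
    have hpos : 0 < a + b * Wt d N ξ := by positivity
    rw [show 1 + b / a * Wt d N ξ = (a + b * Wt d N ξ) / a by field_simp]
    field_simp
  have hint := Wt_one_add_integrable (d := d) (N := N) hd hNd hN
  have h2 : Integrable (fun ξ : V => (1 + Wt d N (l⁻¹ • ξ))⁻¹) :=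
    (integrable_comp_smul_iff (volume : Measure V) (fun η : V => (1 + Wt d N η)⁻¹)
      (inv_ne_zero hlpos.ne')).2 hint
  constructor
  · rw [funext hpt]
    exact h2.const_mul _
  · calc ∫ ξ : V, (a + b * Wt d N ξ)⁻¹
        = ∫ ξ : V, a⁻¹ * (1 + Wt d N (l⁻¹ • ξ))⁻¹ := by simp_rw [hpt]
      _ = a⁻¹ * ∫ ξ : V, (1 + Wt d N (l⁻¹ • ξ))⁻¹ := integral_const_mul _ _
      _ = a⁻¹ * (l ^ d * ∫ η : V, (1 + Wt d N η)⁻¹) := by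
          rw [MeasureTheory.Measure.integral_comp_smul (volume : Measure V)
            (fun η : V => (1 + Wt d N η)⁻¹) l⁻¹]
          congr 1
          rw [finrank_euclideanSpace_fin, smul_eq_mul]
          rw [inv_pow, inv_inv, abs_of_pos (pow_pos hlpos d)]
      _ = a⁻¹ * l ^ d * ∫ η : V, (1 + Wt d N η)⁻¹ := by ring

theorem sq_integrable (f : 𝓢(V, H)) : Integrable (fun x : V => ‖f x‖ ^ 2) := by
  apply (f.integrable.norm.const_mul ((SchwartzMap.seminorm ℝ 0 0) f)).mono'
    ((f.continuous.norm.pow 2).aestronglyMeasurable)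
  filter_upwards with x
  change ‖‖f x‖ ^ 2‖ ≤ _
  rw [Real.norm_of_nonneg (by positivity : (0:ℝ) ≤ ‖f x‖ ^ 2)]
  calc ‖f x‖ ^ 2 = ‖f x‖ * ‖f x‖ := sq (‖f x‖) ▸ by ring
    _ ≤ (SchwartzMap.seminorm ℝ 0 0) f * ‖f x‖ :=
        mul_le_mul_of_nonneg_right (SchwartzMap.norm_le_seminorm ℝ f x) (norm_nonneg _)

theorem key_bound (hd : 1 ≤ d) (hNd : (d : ℝ) < 2 * N) (hN : 1 ≤ N) (f : 𝓢(V, H))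
    {a b : ℝ} (ha : 0 < a) (hb : 0 < b) :
    ∫ ξ : V, ‖𝓕 ⇑f ξ‖ ≤
      Real.sqrt (a⁻¹ * ((a / b) ^ (((2 * N : ℕ) : ℝ))⁻¹) ^ d * ∫ η : V, (1 + Wt d N η)⁻¹) *
      Real.sqrt (a * (∫ x : V, ‖f x‖ ^ 2) +
        b * ∑ j : Fin d, ∫ x : V,
          ‖((SchwartzMap.pderivCLM ℝ (EuclideanSpace.single j (1:ℝ)))^[N] f) x‖ ^ 2) := by
  obtain ⟨hui, huval⟩ := Wt_scaled_integral hd hNd hN ha hb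
  set u : V → ℝ := fun ξ => a + b * Wt d N ξ with hu_def
  have hu : ∀ ξ, 0 < u ξ := fun ξ => by
    have := Wt_nonneg (N := N) ξ; simp only [hu_def]; positivity
  have hucont : Continuous u := continuous_const.add (continuous_const.mul Wt_continuous)
  set F : V → ℝ := fun ξ => ‖𝓕 ⇑f ξ‖ with hF_def
  have hFc : Continuous (𝓕 ⇑f) := by
    rw [← SchwartzMap.fourier_coe, ← SchwartzMap.fourierTransformCLM_apply ℝ f]
    exact (SchwartzMap.fourierTransformCLM ℝ f).continuous
  have hFi : Integrable (𝓕 ⇑f) (volume : Measure V) := by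
    rw [← SchwartzMap.fourier_coe, ← SchwartzMap.fourierTransformCLM_apply ℝ f]
    exact (SchwartzMap.fourierTransformCLM ℝ f).integrable
  have hF2i : Integrable (fun ξ : V => F ξ ^ 2) := by
    have := sq_integrable (SchwartzMap.fourierTransformCLM ℝ f)
    simpa [SchwartzMap.fourierTransformCLM_apply, SchwartzMap.fourier_coe, hF_def] using this
  set G : Fin d → 𝓢(V, H) :=
    fun j => (SchwartzMap.pderivCLM ℝ (EuclideanSpace.single j (1:ℝ)))^[N] f with hG_def
  have hGi : ∀ j, Integrable (fun ξ : V => ‖𝓕 ⇑(G j) ξ‖ ^ 2) := by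
    intro j
    have := sq_integrable (SchwartzMap.fourierTransformCLM ℝ (G j))
    simpa [SchwartzMap.fourierTransformCLM_apply, SchwartzMap.fourier_coe] using this
  set φ : V → ℝ := fun ξ => (Real.sqrt (u ξ))⁻¹ with hφ_def
  set ψ : V → ℝ := fun ξ => Real.sqrt (u ξ) * F ξ with hψ_def
  have hφ2 : ∀ ξ, φ ξ ^ 2 = (u ξ)⁻¹ := fun ξ => by
    simp only [hφ_def]
    rw [inv_pow, Real.sq_sqrt (hu ξ).le]
  have hψ2 : ∀ ξ, ψ ξ ^ 2 = a * F ξ ^ 2 + b * ∑ j : Fin d, ‖𝓕 ⇑(G j) ξ‖ ^ 2 := by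
    intro ξ
    have h1 : ψ ξ ^ 2 = u ξ * F ξ ^ 2 := by
      simp only [hψ_def]
      rw [mul_pow, Real.sq_sqrt (hu ξ).le]
    rw [h1]
    have h2 : ∀ j : Fin d, ‖𝓕 ⇑(G j) ξ‖ ^ 2 = ((2 * π * ξ j) ^ 2) ^ N * F ξ ^ 2 := fun j =>
      my_norm_sq_fourier_iter f j N ξ
    simp only [h2, hu_def, Wt]
    rw [add_mul, mul_assoc, Finset.sum_mul]
  have hψ2i : Integrable (fun ξ : V => ψ ξ ^ 2) := by
    simp only [hψ2]
    exact (hF2i.const_mul a).add ((integrable_finset_sum _ (fun j _ => hGi j)).const_mul b)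
  have hφmeas : Continuous φ := by
    apply Continuous.inv₀ (hucont.sqrt)
    intro ξ
    exact (Real.sqrt_pos.2 (hu ξ)).ne'
  have hψmeas : Continuous ψ := (hucont.sqrt).mul (hFc.norm)
  have hφmem : MemLp φ (ENNReal.ofReal 2) (volume : Measure V) := by
    rw [show ENNReal.ofReal (2:ℝ) = 2 by norm_num]
    apply (memLp_two_iff_integrable_sq hφmeas.aestronglyMeasurable).2
    simp only [hφ2]
    exact hui
  have hψmem : MemLp ψ (ENNReal.ofReal 2) (volume : Measure V) := by
    rw [show ENNReal.ofReal (2:ℝ) = 2 by norm_num]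
    exact (memLp_two_iff_integrable_sq hψmeas.aestronglyMeasurable).2 hψ2i
  have hHold := integral_mul_le_Lp_mul_Lq_of_nonneg (⟨by norm_num, by norm_num, by norm_num⟩ :
      Real.HolderConjugate 2 2)
    (Filter.Eventually.of_forall fun ξ => by positivity)
    (Filter.Eventually.of_forall fun ξ => by positivity) hφmem hψmem
  have hprod : ∀ ξ, φ ξ * ψ ξ = F ξ := by
    intro ξ
    simp only [hφ_def, hψ_def]
    rw [← mul_assoc, inv_mul_cancel₀ (Real.sqrt_pos.2 (hu ξ)).ne', one_mul]
  calc ∫ ξ : V, F ξ = ∫ ξ : V, φ ξ * ψ ξ := by simp_rw [hprod]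
    _ ≤ (∫ ξ : V, φ ξ ^ (2:ℝ)) ^ ((1:ℝ)/2) * (∫ ξ : V, ψ ξ ^ (2:ℝ)) ^ ((1:ℝ)/2) := hHold
    _ = Real.sqrt (∫ ξ : V, φ ξ ^ 2) * Real.sqrt (∫ ξ : V, ψ ξ ^ 2) := by
        rw [Real.sqrt_eq_rpow, Real.sqrt_eq_rpow]
        norm_num
    _ ≤ _ := by
        apply mul_le_mul _ _ (Real.sqrt_nonneg _) (Real.sqrt_nonneg _)
        · apply le_of_eq
          congr 1
          simp only [hφ2]
          rw [huval]
        · apply le_of_eq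
          congr 1
          simp only [hψ2]
          rw [integral_add (hF2i.const_mul a)
            ((integrable_finset_sum _ (fun j _ => hGi j)).const_mul b),
            integral_const_mul, integral_const_mul, integral_finset_sum _ (fun j _ => hGi j)]
          congr 1
          · congr 1
            exact my_plancherel f
          · congr 1
            apply Finset.sum_congr rfl
            intro j _
            exact my_plancherel (G j)

theorem rpow_pow_identity {x : ℝ} (hx : 0 < x) {d N : ℕ} :
    ((x) ^ (((2 * N : ℕ) : ℝ))⁻¹) ^ d = x ^ ((d : ℝ) / (2 * N)) := by
  rw [← Real.rpow_natCast (x ^ (((2 * N : ℕ) : ℝ))⁻¹) d, ← Real.rpow_mul hx.le]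
  congr 1
  push_cast
  rw [inv_mul_eq_div]

theorem sqrt_rpow_half (x c : ℝ) (hx : 0 ≤ x) : Real.sqrt (x ^ c) = x ^ (c / 2) := by
  rw [Real.sqrt_eq_rpow, ← Real.rpow_mul hx]
  congr 1
  ring

theorem le_zero_of_forall_le_sqrt {I K ρ : ℝ} (hρ : 0 < ρ)
    (h : ∀ t : ℝ, 0 < t → I ≤ Real.sqrt (K * t ^ ρ)) : I ≤ 0 := by
  have h2 : Filter.Tendsto (fun t : ℝ => t ^ ρ) (nhds 0) (nhds 0) := by
    have := (Real.continuousAt_rpow_const 0 ρ (Or.inr hρ.le)).tendsto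
    simpa [Real.zero_rpow hρ.ne'] using this
  have h3 : Filter.Tendsto (fun s : ℝ => Real.sqrt (K * s)) (nhds 0) (nhds 0) := by
    have hc : Continuous fun s : ℝ => Real.sqrt (K * s) :=
      Real.continuous_sqrt.comp (continuous_const.mul continuous_id)
    have := hc.tendsto 0
    simpa using this
  have h4 : Filter.Tendsto (fun t : ℝ => Real.sqrt (K * t ^ ρ))
      (nhdsWithin 0 (Set.Ioi 0)) (nhds 0) :=
    (h3.comp h2).mono_left nhdsWithin_le_nhds
  exact ge_of_tendsto h4 (by filter_upwards [self_mem_nhdsWithin] with t ht using h t ht)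

theorem optimize {I κ₀ M₂ S : ℝ} {d N : ℕ} (hd : 1 ≤ d) (hNd : (d : ℝ) < 2 * N)
    (hκ₀ : 0 ≤ κ₀) (hM₂ : 0 ≤ M₂) (hS : 0 ≤ S)
    (hKB : ∀ a b : ℝ, 0 < a → 0 < b →
      I ≤ Real.sqrt (a⁻¹ * ((a / b) ^ (((2 * N : ℕ) : ℝ))⁻¹) ^ d * κ₀) *
          Real.sqrt (a * M₂ + b * S)) :
    I ≤ Real.sqrt (2 * κ₀) * M₂ ^ ((1 - (d : ℝ) / (2 * N)) / 2)
        * S ^ (((d : ℝ) / (2 * N)) / 2) := by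
  have hd1 : (1:ℝ) ≤ d := by exact_mod_cast hd
  have h2N : (0:ℝ) < 2 * N := by linarith
  set θ : ℝ := (d : ℝ) / (2 * N) with hθ_def
  have hθpos : 0 < θ := by
    apply div_pos (by linarith) h2N
  have hθlt : θ < 1 := by
    rw [hθ_def, div_lt_one h2N]
    exact hNd
  rcases eq_or_lt_of_le hM₂ with hM | hM
  · -- M₂ = 0
    have hI0 : I ≤ 0 := by
      apply le_zero_of_forall_le_sqrt (K := κ₀ * S) (ρ := 1 - θ) (by linarith)
      intro t ht
      refine (hKB 1 t one_pos ht).trans (le_of_eq ?_)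
      rw [← Real.sqrt_mul (by positivity), ← hM]
      congr 1
      rw [rpow_pow_identity (by positivity), ← hθ_def]
      rw [Real.div_rpow (by norm_num) ht.le, Real.one_rpow,
        Real.rpow_sub ht, Real.rpow_one]
      have h1 : t ^ θ ≠ 0 := (Real.rpow_pos_of_pos ht θ).ne'
      field_simp
      ring
    refine hI0.trans (by positivity)
  · rcases eq_or_lt_of_le hS with hS' | hS'
    · -- S = 0
      have hI0 : I ≤ 0 := by
        apply le_zero_of_forall_le_sqrt (K := κ₀ * M₂) (ρ := θ) hθpos
        intro t ht
        refine (hKB t 1 ht one_pos).trans (le_of_eq ?_)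
        rw [← Real.sqrt_mul (by positivity), ← hS']
        congr 1
        rw [div_one, rpow_pow_identity ht, ← hθ_def]
        have h1 : t ^ θ ≠ 0 := (Real.rpow_pos_of_pos ht θ).ne'
        field_simp
        ring
      refine hI0.trans (by positivity)
    · -- main case : a = S, b = M₂
      refine (hKB S M₂ hS' hM).trans (le_of_eq ?_)
      rw [← Real.sqrt_mul (by positivity)]
      have hrad : S⁻¹ * ((S / M₂) ^ (((2 * N : ℕ) : ℝ))⁻¹) ^ d * κ₀ * (S * M₂ + M₂ * S)
          = 2 * κ₀ * (M₂ ^ (1 - θ) * S ^ θ) := by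
        rw [rpow_pow_identity (div_pos hS' hM), ← hθ_def,
          Real.div_rpow hS'.le hM.le, Real.rpow_sub hM, Real.rpow_one]
        have h1 : M₂ ^ θ ≠ 0 := (Real.rpow_pos_of_pos hM θ).ne'
        field_simp
        ring
      rw [hrad]
      rw [Real.sqrt_mul (by positivity : (0:ℝ) ≤ 2 * κ₀)]
      rw [Real.sqrt_mul (Real.rpow_nonneg hM₂ _)]
      rw [sqrt_rpow_half _ _ hM₂, sqrt_rpow_half _ _ hS]
      ring

theorem final_thm (hd : 1 ≤ d) (hN : (d : ℝ) / 2 < N) :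
    ∃ C > 0, ∀ f : 𝓢(V, H),
      (∫⁻ ξ : V, (‖∫ x : V, Complex.exp (((-2 * π * (inner ℝ x ξ : ℝ) : ℝ) : ℂ)
            * Complex.I) • f x‖₊ : ℝ≥0∞))
        ≤ ENNReal.ofReal
            (C * (∫ x : V, ‖f x‖ ^ 2) ^ ((1 - (d : ℝ) / (2 * N)) / 2)
               * ((∑ j : Fin d,
                    (∫ x : V,
                      ‖((SchwartzMap.pderivCLM ℝ (EuclideanSpace.single j (1:ℝ)))^[N] f) x‖ ^ 2)
                      ^ ((1 : ℝ) / 2))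
                  ^ ((d : ℝ) / (2 * N)))) := by
  have hNd : (d : ℝ) < 2 * N := by linarith
  have hN1 : 1 ≤ N := by
    rcases Nat.eq_zero_or_pos N with h | h
    · exfalso
      subst h
      push_cast at hNd
      have h1 : (1:ℝ) ≤ d := by exact_mod_cast hd
      linarith
    · exact h
  have hκ₀ : 0 ≤ ∫ η : V, (1 + Wt d N η)⁻¹ := integral_nonneg fun η => by
    have := Wt_nonneg (d := d) (N := N) η
    positivity
  refine ⟨Real.sqrt (2 * ∫ η : V, (1 + Wt d N η)⁻¹) + 1, by positivity, fun f => ?_⟩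
  have hFi : Integrable (𝓕 ⇑f) (volume : Measure V) := by
    rw [← SchwartzMap.fourier_coe, ← SchwartzMap.fourierTransformCLM_apply ℝ f]
    exact (SchwartzMap.fourierTransformCLM ℝ f).integrable
  have hLHS : (∫⁻ ξ : V, (‖∫ x : V, Complex.exp (((-2 * π * (inner ℝ x ξ : ℝ) : ℝ) : ℂ)
      * Complex.I) • f x‖₊ : ℝ≥0∞)) = ENNReal.ofReal (∫ ξ : V, ‖𝓕 ⇑f ξ‖) := by
    have hpt : ∀ ξ : V, (∫ x : V, Complex.exp (((-2 * π * (inner ℝ x ξ : ℝ) : ℝ) : ℂ)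
        * Complex.I) • f x) = 𝓕 ⇑f ξ := fun ξ => (Real.fourier_eq' ⇑f ξ).symm
    simp_rw [hpt]
    rw [ofReal_integral_norm_eq_lintegral_enorm hFi]
    exact lintegral_congr fun _ => (enorm_eq_nnnorm _).symm
  rw [hLHS]
  apply ENNReal.ofReal_le_ofReal
  have hM₂0 : 0 ≤ ∫ x : V, ‖f x‖ ^ 2 := integral_nonneg fun x => sq_nonneg _
  have hP0 : ∀ j : Fin d, 0 ≤ ∫ x : V,
      ‖((SchwartzMap.pderivCLM ℝ (EuclideanSpace.single j (1:ℝ)))^[N] f) x‖ ^ 2 :=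
    fun j => integral_nonneg fun x => sq_nonneg _
  have hS0 : 0 ≤ ∑ j : Fin d, ∫ x : V,
      ‖((SchwartzMap.pderivCLM ℝ (EuclideanSpace.single j (1:ℝ)))^[N] f) x‖ ^ 2 :=
    Finset.sum_nonneg fun j _ => hP0 j
  have hopt := optimize (I := ∫ ξ : V, ‖𝓕 ⇑f ξ‖) hd hNd hκ₀ hM₂0 hS0
    (fun a b ha hb => key_bound hd hNd hN1 f ha hb)
  refine hopt.trans ?_
  have hq0 : 0 ≤ ∑ j : Fin d, (∫ x : V,
      ‖((SchwartzMap.pderivCLM ℝ (EuclideanSpace.single j (1:ℝ)))^[N] f) x‖ ^ 2) ^ ((1:ℝ)/2) :=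
    Finset.sum_nonneg fun j _ => Real.rpow_nonneg (hP0 j) _
  have hSQ : (∑ j : Fin d, ∫ x : V,
      ‖((SchwartzMap.pderivCLM ℝ (EuclideanSpace.single j (1:ℝ)))^[N] f) x‖ ^ 2)
      ≤ (∑ j : Fin d, (∫ x : V,
        ‖((SchwartzMap.pderivCLM ℝ (EuclideanSpace.single j (1:ℝ)))^[N] f) x‖ ^ 2)
          ^ ((1:ℝ)/2)) ^ 2 := by
    rw [sq, Finset.sum_mul]
    apply Finset.sum_le_sum
    intro j _
    have hPq : (∫ x : V,
        ‖((SchwartzMap.pderivCLM ℝ (EuclideanSpace.single j (1:ℝ)))^[N] f) x‖ ^ 2)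
        = ((∫ x : V,
          ‖((SchwartzMap.pderivCLM ℝ (EuclideanSpace.single j (1:ℝ)))^[N] f) x‖ ^ 2)
            ^ ((1:ℝ)/2)) ^ 2 := by
      rw [← Real.rpow_natCast ((∫ x : V,
        ‖((SchwartzMap.pderivCLM ℝ (EuclideanSpace.single j (1:ℝ)))^[N] f) x‖ ^ 2)
          ^ ((1:ℝ)/2)) 2, ← Real.rpow_mul (hP0 j)]
      norm_num
    calc (∫ x : V, ‖((SchwartzMap.pderivCLM ℝ (EuclideanSpace.single j (1:ℝ)))^[N] f) x‖ ^ 2)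
        = ((∫ x : V,
            ‖((SchwartzMap.pderivCLM ℝ (EuclideanSpace.single j (1:ℝ)))^[N] f) x‖ ^ 2)
              ^ ((1:ℝ)/2)) * ((∫ x : V,
            ‖((SchwartzMap.pderivCLM ℝ (EuclideanSpace.single j (1:ℝ)))^[N] f) x‖ ^ 2)
              ^ ((1:ℝ)/2)) := by rw [← sq]; exact hPq
      _ ≤ _ := by
          apply mul_le_mul_of_nonneg_left _ (Real.rpow_nonneg (hP0 j) _)
          apply Finset.single_le_sum (f := fun j : Fin d => (∫ x : V,
            ‖((SchwartzMap.pderivCLM ℝ (EuclideanSpace.single j (1:ℝ)))^[N] f) x‖ ^ 2)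
              ^ ((1:ℝ)/2)) (fun i _ => Real.rpow_nonneg (hP0 i) _) (Finset.mem_univ j)
  have hstep : (∑ j : Fin d, ∫ x : V,
      ‖((SchwartzMap.pderivCLM ℝ (EuclideanSpace.single j (1:ℝ)))^[N] f) x‖ ^ 2)
        ^ (((d : ℝ) / (2 * N)) / 2)
      ≤ (∑ j : Fin d, (∫ x : V,
        ‖((SchwartzMap.pderivCLM ℝ (EuclideanSpace.single j (1:ℝ)))^[N] f) x‖ ^ 2)
          ^ ((1:ℝ)/2)) ^ ((d : ℝ) / (2 * N)) := by
    calc _ ≤ ((∑ j : Fin d, (∫ x : V,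
        ‖((SchwartzMap.pderivCLM ℝ (EuclideanSpace.single j (1:ℝ)))^[N] f) x‖ ^ 2)
          ^ ((1:ℝ)/2)) ^ 2) ^ (((d : ℝ) / (2 * N)) / 2) :=
        Real.rpow_le_rpow hS0 hSQ (by positivity)
      _ = _ := by
        rw [← Real.rpow_natCast (∑ j : Fin d, (∫ x : V,
          ‖((SchwartzMap.pderivCLM ℝ (EuclideanSpace.single j (1:ℝ)))^[N] f) x‖ ^ 2)
            ^ ((1:ℝ)/2)) 2, ← Real.rpow_mul hq0]
        congr 1
        push_cast
        ring
  calc Real.sqrt (2 * ∫ η : V, (1 + Wt d N η)⁻¹)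
        * (∫ x : V, ‖f x‖ ^ 2) ^ ((1 - (d : ℝ) / (2 * N)) / 2)
        * (∑ j : Fin d, ∫ x : V,
            ‖((SchwartzMap.pderivCLM ℝ (EuclideanSpace.single j (1:ℝ)))^[N] f) x‖ ^ 2)
            ^ (((d : ℝ) / (2 * N)) / 2)
      ≤ Real.sqrt (2 * ∫ η : V, (1 + Wt d N η)⁻¹)
        * (∫ x : V, ‖f x‖ ^ 2) ^ ((1 - (d : ℝ) / (2 * N)) / 2)
        * (∑ j : Fin d, (∫ x : V,
            ‖((SchwartzMap.pderivCLM ℝ (EuclideanSpace.single j (1:ℝ)))^[N] f) x‖ ^ 2)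
              ^ ((1:ℝ)/2)) ^ ((d : ℝ) / (2 * N)) := by
        apply mul_le_mul_of_nonneg_left hstep
        have h1 : (0:ℝ) ≤ Real.sqrt (2 * ∫ η : V, (1 + Wt d N η)⁻¹) := Real.sqrt_nonneg _
        have h2 : (0:ℝ) ≤ (∫ x : V, ‖f x‖ ^ 2) ^ ((1 - (d : ℝ) / (2 * N)) / 2) :=
          Real.rpow_nonneg hM₂0 _
        positivity
    _ ≤ _ := by
        apply mul_le_mul_of_nonneg_right (mul_le_mul_of_nonneg_right _ (Real.rpow_nonneg hM₂0 _))
          (Real.rpow_nonneg hq0 _)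
        linarith [Real.sqrt_nonneg (2 * ∫ η : V, (1 + Wt d N η)⁻¹)]


end Aux

theorem bernstein_multiplier_estimate (d : ℕ) (hd : 1 ≤ d)
    (H : Type*) [NormedAddCommGroup H] [InnerProductSpace ℂ H] [CompleteSpace H]
    [SecondCountableTopology H]
    (N : ℕ) (hN : (d : ℝ) / 2 < N) :
    ∃ C > 0, ∀ f : 𝓢(EuclideanSpace ℝ (Fin d), H),
      (∫⁻ ξ, (‖∫ x, Complex.exp (((-2 * π * (inner ℝ x ξ : ℝ) : ℝ) : ℂ) * Complex.I) • f x‖₊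
          : ℝ≥0∞))
        ≤ ENNReal.ofReal
            (C * (∫ x, ‖f x‖ ^ 2) ^ ((1 - (d : ℝ) / (2 * N)) / 2)
               * ((∑ j : Fin d,
                    (∫ x, ‖iterPartialDeriv d j N (⇑f) x‖ ^ 2) ^ ((1 : ℝ) / 2))
                  ^ ((d : ℝ) / (2 * N)))) := by
  obtain ⟨C, hC, hb⟩ := final_thm (d := d) (H := H) (N := N) hd hN
  refine ⟨C, hC, fun f => ?_⟩
  have h := hb f
  simpa only [iterPartialDeriv_eq] using h
end
end
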